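/- arXiv:0908.0277 — 9 statements merged into one kernel-verified Lean document; each statement's English description precedes it below -/
import Mathlib

section
/- Let a ∈ ℂ and ω ∈ ℂ with |ω| = 1. Then the cubic polynomial p(λ) = -λ³ + a λ² - ω · (conj a) · λ + ω has at least one root λ ∈ ℂ with |λ| = 1. -/
/-!
Pick `u` with `u² = -ω`. For `z` on the unit circle, `conj z = z⁻¹` and `conj u = u⁻¹`, and
`p(z²) = 2 u z³ · Re((a z - z³) conj u)`. The real factor is odd in `z`, so along `z = exp(t i)` it
is `π`-antiperiodic in `t` and vanishes somewhere by the intermediate value theorem.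
-/

open Complex ComplexConjugate Real

theorem Function.Antiperiodic.exists_eq_zero {α β : Type*} [ConditionallyCompleteLinearOrder α]
    [TopologicalSpace α] [OrderTopology α] [DenselyOrdered α] [AddZeroClass α]
    [AddCommGroup β] [LinearOrder β] [IsOrderedAddMonoid β] [TopologicalSpace β]
    [OrderClosedTopology β] {f : α → β} {c : α} (hf : Continuous f)
    (h : Function.Antiperiodic f c) : ∃ t, f t = 0 := by
  have h0 : (0 : β) ∈ Set.uIcc (f 0) (f c) := by
    rw [h.eq]
    rcases le_total (f 0) 0 with h' | h'
    · exact Set.mem_uIcc.2 (Or.inl ⟨h', by simpa using h'⟩)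
    · exact Set.mem_uIcc.2 (Or.inr ⟨by simpa using h', h'⟩)
  obtain ⟨t, -, ht⟩ := intermediate_value_uIcc hf.continuousOn h0
  exact ⟨t, ht⟩

theorem cubic_sq_eq_mul_re (a ω u z : ℂ) (hz : ‖z‖ = 1) (hu : ‖u‖ = 1) (huω : u ^ 2 = -ω) :
    -(z ^ 2) ^ 3 + a * (z ^ 2) ^ 2 - ω * conj a * z ^ 2 + ω
      = 2 * u * z ^ 3 * ((a * z - z ^ 3) * conj u).re := by
  have hz0 : z ≠ 0 := by rintro rfl; simp at hz
  have hu0 : u ≠ 0 := by rintro rfl; simp at hu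
  rw [re_eq_add_conj, map_mul, map_sub, map_mul, map_pow, ← inv_eq_conj hz, conj_conj,
    ← inv_eq_conj hu]
  field_simp
  linear_combination (1 - z ^ 2 * conj a) * huω

/-- The cubic `-λ³ + aλ² - ω (conj a) λ + ω` with `|ω| = 1` has a root on the
unit circle. -/
theorem stmt_2 (a ω : ℂ) (hω : ‖ω‖ = 1) :
    ∃ l : ℂ, ‖l‖ = 1 ∧
      -l ^ 3 + a * l ^ 2 - ω * (starRingEnd ℂ a) * l + ω = 0 := by
  obtain ⟨u, hu⟩ := IsAlgClosed.exists_pow_nat_eq (-ω) two_pos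
  have hu1 : ‖u‖ = 1 := by
    rw [← pow_left_inj₀ (norm_nonneg u) zero_le_one two_ne_zero, ← norm_pow, hu, norm_neg, hω,
      one_pow]
  set e : ℝ → ℂ := fun t ↦ exp (t * I)
  have he : Function.Antiperiodic e π := fun t ↦ by
    simp only [e, ofReal_add, add_mul, exp_antiperiodic _]
  obtain ⟨t, ht⟩ : ∃ t, ((a * e t - e t ^ 3) * conj u).re = 0 := by
    refine Function.Antiperiodic.exists_eq_zero (c := π) (by fun_prop) fun t ↦ ?_
    rw [he t, show a * -e t - (-e t) ^ 3 = -(a * e t - e t ^ 3) by ring, neg_mul, neg_re]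
  refine ⟨e t ^ 2, by simp [e, norm_exp_ofReal_mul_I], ?_⟩
  rw [cubic_sq_eq_mul_re a ω u (e t) (norm_exp_ofReal_mul_I t) hu1 hu, ht]
  simp
end

section
/- Let f : ℝ → ℝ be continuous with antiderivative F (F' = f), let c, E ∈ ℝ, let I ⊆ ℝ be an open interval, and let u : ℝ × I → ℝ be a C² family such that for every a ∈ I and every x ∈ ℝ both (c/2)·(∂ₓu(x,a))² - ((c-1)/2)·u(x,a)² + F(u(x,a)) = a·u(x,a) + E and c·∂ₓ²u(x,a) - (c-1)·u(x,a) + f(u(x,a)) = a hold. Then c·(∂ₓu(x,a)·∂ₓ∂ₐu(x,a) - ∂ₐu(x,a)·∂ₓ²u(x,a)) = u(x,a) for all (x,a) ∈ ℝ × I. -/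
/-!
Since the quadrature relation holds for every parameter in the open set `I`, it may be
differentiated in `a`: `c u_x ∂ₐu_x - (c - 1) u u_a + f(u) u_a = u + a u_a`. Subtracting `u_a`
times the profile equation leaves `c (u_x ∂ₐu_x - u_a u_xx) = u`, and `∂ₐu_x = ∂ₓu_a` by the
symmetry of second derivatives of a `C²` function.
-/

open Function

section PartialDerivatives

variable {E : Type*} [NormedAddCommGroup E] [NormedSpace ℝ E] {u : ℝ → ℝ → E} {x a : ℝ}

theorem hasDerivAt_uncurry_left (hu : DifferentiableAt ℝ (uncurry u) (x, a)) :
    HasDerivAt (fun y => u y a) (fderiv ℝ (uncurry u) (x, a) (1, 0)) x :=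
  hu.hasFDerivAt.comp_hasDerivAt (f := fun y => (y, a)) x
    ((hasDerivAt_id' x).prodMk (hasDerivAt_const x a))

theorem hasDerivAt_uncurry_right (hu : DifferentiableAt ℝ (uncurry u) (x, a)) :
    HasDerivAt (fun t => u x t) (fderiv ℝ (uncurry u) (x, a) (0, 1)) a :=
  hu.hasFDerivAt.comp_hasDerivAt (f := fun t => (x, t)) a
    ((hasDerivAt_const a x).prodMk (hasDerivAt_id' a))

theorem hasDerivAt_deriv_uncurry_left (hu : ContDiff ℝ 2 (uncurry u)) :
    HasDerivAt (fun t => deriv (fun y => u y t) x)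
      (fderiv ℝ (fderiv ℝ (uncurry u)) (x, a) (0, 1) (1, 0)) a := by
  have hpartial : (fun t => deriv (fun y => u y t) x) =
      fun t => fderiv ℝ (uncurry u) (x, t) (1, 0) :=
    funext fun t => (hasDerivAt_uncurry_left (hu.differentiable (by norm_num) (x, t))).deriv
  rw [hpartial]
  have hfderiv : Differentiable ℝ (fderiv ℝ (uncurry u)) :=
    (hu.fderiv_right le_rfl).differentiable one_ne_zero
  have h := (hasDerivAt_uncurry_right (u := fun y t => fderiv ℝ (uncurry u) (y, t))
    (hfderiv (x, a))).clm_apply (hasDerivAt_const a ((1 : ℝ), (0 : ℝ)))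
  simp only [map_zero, add_zero] at h
  exact h

theorem hasDerivAt_deriv_uncurry_right (hu : ContDiff ℝ 2 (uncurry u)) :
    HasDerivAt (fun y => deriv (fun t => u y t) a)
      (fderiv ℝ (fderiv ℝ (uncurry u)) (x, a) (1, 0) (0, 1)) x := by
  have hpartial : (fun y => deriv (fun t => u y t) a) =
      fun y => fderiv ℝ (uncurry u) (y, a) (0, 1) :=
    funext fun y => (hasDerivAt_uncurry_right (hu.differentiable (by norm_num) (y, a))).deriv
  rw [hpartial]
  have hfderiv : Differentiable ℝ (fderiv ℝ (uncurry u)) :=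
    (hu.fderiv_right le_rfl).differentiable one_ne_zero
  have h := (hasDerivAt_uncurry_left (u := fun y t => fderiv ℝ (uncurry u) (y, t))
    (hfderiv (x, a))).clm_apply (hasDerivAt_const x ((0 : ℝ), (1 : ℝ)))
  simp only [map_zero, add_zero] at h
  exact h

theorem deriv_deriv_uncurry_comm (hu : ContDiff ℝ 2 (uncurry u)) :
    deriv (fun y => deriv (fun t => u y t) a) x = deriv (fun t => deriv (fun y => u y t) x) a := by
  rw [(hasDerivAt_deriv_uncurry_right hu).deriv, (hasDerivAt_deriv_uncurry_left hu).deriv]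
  exact hu.contDiffAt.isSymmSndFDerivAt (by simp) (1, 0) (0, 1)

end PartialDerivatives

theorem stmt_8_general (f F : ℝ → ℝ) (hF : ∀ y : ℝ, HasDerivAt F (f y) y)
    (c E : ℝ) (I : Set ℝ) (hI : IsOpen I)
    (u : ℝ → ℝ → ℝ) (hu : ContDiff ℝ 2 (Function.uncurry u))
    (hquad : ∀ a ∈ I, ∀ x : ℝ,
      (c / 2) * (deriv (fun y => u y a) x) ^ 2 - ((c - 1) / 2) * (u x a) ^ 2 + F (u x a)
        = a * u x a + E)
    (hprof : ∀ a ∈ I, ∀ x : ℝ,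
      c * deriv (deriv (fun y => u y a)) x - (c - 1) * u x a + f (u x a) = a) :
    ∀ a ∈ I, ∀ x : ℝ,
      c * (deriv (fun y => u y a) x * deriv (fun y => deriv (fun t => u y t) a) x
        - deriv (fun t => u x t) a * deriv (deriv (fun y => u y a)) x) = u x a := by
  intro a ha x
  have hu_a : HasDerivAt (fun t => u x t) (deriv (fun t => u x t) a) a :=
    (hasDerivAt_uncurry_right (hu.differentiable (by norm_num) (x, a))).differentiableAt.hasDerivAt
  have hux_a : HasDerivAt (fun t => deriv (fun y => u y t) x)
      (deriv (fun t => deriv (fun y => u y t) x) a) a :=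
    (hasDerivAt_deriv_uncurry_left hu).differentiableAt.hasDerivAt
  have hquad_a : c * deriv (fun y => u y a) x * deriv (fun t => deriv (fun y => u y t) x) a
      - (c - 1) * u x a * deriv (fun t => u x t) a + f (u x a) * deriv (fun t => u x t) a
      = u x a + a * deriv (fun t => u x t) a := by
    have hlhs := (((hux_a.pow 2).const_mul (c / 2)).sub ((hu_a.pow 2).const_mul ((c - 1) / 2))).add
      ((hF (u x a)).comp a hu_a)
    have hrhs := ((hasDerivAt_id' a).mul hu_a).add_const E
    have heq : (fun t => (c / 2) * (deriv (fun y => u y t) x) ^ 2 - ((c - 1) / 2) * (u x t) ^ 2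
        + F (u x t)) =ᶠ[nhds a] fun t => t * u x t + E :=
      Filter.eventually_of_mem (hI.mem_nhds ha) fun t ht => hquad t ht x
    have hderiv := hlhs.unique (heq.hasDerivAt_iff.mpr hrhs)
    linear_combination hderiv
  rw [deriv_deriv_uncurry_comm hu]
  linear_combination hquad_a - deriv (fun t => u x t) a * hprof a ha x

/-- The Jacobian identity `c {u, u_x}_{x,a} = u`: for a family of profiles
satisfying both the quadrature relation and the profile equation,
`c (u_x (u_a)_x - u_a u_xx) = u`. -/
theorem stmt_8 (f F : ℝ → ℝ) (hf : Continuous f) (hF : ∀ y : ℝ, HasDerivAt F (f y) y)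
    (c E : ℝ) (I : Set ℝ) (hI : IsOpen I) (hIconn : I.OrdConnected)
    (u : ℝ → ℝ → ℝ) (hu : ContDiff ℝ 2 (Function.uncurry u))
    (hquad : ∀ a ∈ I, ∀ x : ℝ,
      (c / 2) * (deriv (fun y => u y a) x) ^ 2 - ((c - 1) / 2) * (u x a) ^ 2 + F (u x a)
        = a * u x a + E)
    (hprof : ∀ a ∈ I, ∀ x : ℝ,
      c * deriv (deriv (fun y => u y a)) x - (c - 1) * u x a + f (u x a) = a) :
    ∀ a ∈ I, ∀ x : ℝ,
      c * (deriv (fun y => u y a) x * deriv (fun y => deriv (fun t => u y t) a) x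
        - deriv (fun t => u x t) a * deriv (deriv (fun y => u y a)) x) = u x a :=
  stmt_8_general f F hF c E I hI u hu hquad hprof
end

section
/- Let U ⊆ ℝ² be open, let u : ℝ × U → ℝ be continuously differentiable, and let T : U → (0,∞) be differentiable with u(x + T(a,E), a, E) = u(x, a, E) for all x ∈ ℝ and (a,E) ∈ U. Then for each (a,E) ∈ U, the function φ₀(x) := ∂ₐT(a,E)·∂_E u(x,a,E) - ∂_E T(a,E)·∂ₐu(x,a,E) is periodic in x with period T(a,E), i.e., φ₀(x + T(a,E)) = φ₀(x) for all x. -/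
/-!
Differentiating the periodicity relation `u (x + T a E) a E = u x a E` in `a` gives
`u_a(x) = T_a u_x(x + T) + u_a(x + T)`, and in `E` likewise `u_E(x) = T_E u_x(x + T) + u_E(x + T)`.
In `T_a u_E - T_E u_a` the two `u_x(x + T)` terms cancel.
-/

open Filter Topology

theorem HasFDerivAt.hasDerivAt_comp_prodMk {f : ℝ × ℝ → ℝ} {L : ℝ × ℝ →L[ℝ] ℝ}
    {γ₁ γ₂ : ℝ → ℝ} {γ₁' γ₂' t : ℝ} (hf : HasFDerivAt f L (γ₁ t, γ₂ t))
    (h₁ : HasDerivAt γ₁ γ₁' t) (h₂ : HasDerivAt γ₂ γ₂' t) :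
    HasDerivAt (fun s => f (γ₁ s, γ₂ s)) (γ₁' * L (1, 0) + γ₂' * L (0, 1)) t := by
  have hL : L (γ₁', γ₂') = γ₁' * L (1, 0) + γ₂' * L (0, 1) := by
    rw [show ((γ₁', γ₂') : ℝ × ℝ) = γ₁' • (1, 0) + γ₂' • (0, 1) by simp, map_add, map_smul,
      map_smul, smul_eq_mul, smul_eq_mul]
  rw [← hL]
  exact hf.comp_hasDerivAt t (h₁.prodMk h₂)

theorem deriv_param_eq_of_periodic {v : ℝ → ℝ → ℝ} {τ : ℝ → ℝ} {x s₀ : ℝ}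
    (hv : DifferentiableAt ℝ (fun q : ℝ × ℝ => v q.1 q.2) (x + τ s₀, s₀))
    (hτ : DifferentiableAt ℝ τ s₀) (hper : ∀ᶠ s in 𝓝 s₀, v (x + τ s) s = v x s) :
    deriv (fun s => v x s) s₀
      = deriv τ s₀ * deriv (fun y => v y s₀) (x + τ s₀)
        + deriv (fun s => v (x + τ s₀) s) s₀ := by
  set L := fderiv ℝ (fun q : ℝ × ℝ => v q.1 q.2) (x + τ s₀, s₀)
  have hL : HasFDerivAt (fun q : ℝ × ℝ => v q.1 q.2) L (x + τ s₀, s₀) := hv.hasFDerivAt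
  have hy : HasDerivAt (fun y => v y s₀) (1 * L (1, 0) + 0 * L (0, 1)) (x + τ s₀) :=
    hL.hasDerivAt_comp_prodMk (γ₁ := id) (γ₂ := fun _ => s₀) (hasDerivAt_id _)
      (hasDerivAt_const _ _)
  have hs : HasDerivAt (fun s => v (x + τ s₀) s) (0 * L (1, 0) + 1 * L (0, 1)) s₀ :=
    hL.hasDerivAt_comp_prodMk (γ₁ := fun _ => x + τ s₀) (γ₂ := id) (hasDerivAt_const _ _)
      (hasDerivAt_id _)
  have hcurve : HasDerivAt (fun s => v (x + τ s) s)
      (deriv τ s₀ * L (1, 0) + 1 * L (0, 1)) s₀ :=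
    hL.hasDerivAt_comp_prodMk (γ₁ := fun s => x + τ s) (γ₂ := id)
      (hτ.hasDerivAt.const_add x) (hasDerivAt_id _)
  rw [(hcurve.congr_of_eventuallyEq (hper.mono fun _ h => h.symm)).deriv, hy.deriv, hs.deriv]
  ring

theorem stmt_9_general (U : Set (ℝ × ℝ)) (hU : IsOpen U)
    (u : ℝ → ℝ → ℝ → ℝ)
    (hu : ContDiff ℝ 1 (fun q : ℝ × ℝ × ℝ => u q.1 q.2.1 q.2.2))
    (T : ℝ → ℝ → ℝ)
    (hT : ∀ p ∈ U, DifferentiableAt ℝ (fun q : ℝ × ℝ => T q.1 q.2) p)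
    (hper : ∀ p ∈ U, ∀ x : ℝ, u (x + T p.1 p.2) p.1 p.2 = u x p.1 p.2) :
    ∀ p ∈ U, ∀ x : ℝ,
      (fun y : ℝ =>
          deriv (fun a => T a p.2) p.1 * deriv (fun E => u y p.1 E) p.2
            - deriv (fun E => T p.1 E) p.2 * deriv (fun a => u y a p.2) p.1)
        (x + T p.1 p.2)
      = (fun y : ℝ =>
          deriv (fun a => T a p.2) p.1 * deriv (fun E => u y p.1 E) p.2
            - deriv (fun E => T p.1 E) p.2 * deriv (fun a => u y a p.2) p.1) x := by
  rintro ⟨a₀, E₀⟩ hp x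
  have hud : Differentiable ℝ (fun q : ℝ × ℝ × ℝ => u q.1 q.2.1 q.2.2) :=
    hu.differentiable one_ne_zero
  have hTp := hT _ hp
  have hnear : ∀ᶠ q in 𝓝 (a₀, E₀), q ∈ U := hU.mem_nhds hp
  have hua := deriv_param_eq_of_periodic (v := fun y a => u y a E₀) (τ := fun a => T a E₀)
    (x := x) (by fun_prop) (by fun_prop)
    ((Continuous.prodMk_left E₀).continuousAt.eventually hnear |>.mono fun a ha => hper _ ha x)
  have huE := deriv_param_eq_of_periodic (v := fun y E => u y a₀ E) (τ := fun E => T a₀ E)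
    (x := x) (by fun_prop) (by fun_prop)
    ((Continuous.prodMk_right a₀).continuousAt.eventually hnear |>.mono fun E hE => hper _ hE x)
  simp only at hua huE ⊢
  rw [hua, huE]
  ring

/-- The combination `φ₀ = T_a u_E - T_E u_a` of parameter variations of a
`T(a,E)`-periodic family `u(x;a,E)` is itself periodic with period `T(a,E)`. -/
theorem stmt_9 (U : Set (ℝ × ℝ)) (hU : IsOpen U)
    (u : ℝ → ℝ → ℝ → ℝ)
    (hu : ContDiff ℝ 1 (fun q : ℝ × ℝ × ℝ => u q.1 q.2.1 q.2.2))
    (T : ℝ → ℝ → ℝ)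
    (hT : ∀ p ∈ U, DifferentiableAt ℝ (fun q : ℝ × ℝ => T q.1 q.2) p)
    (hTpos : ∀ p ∈ U, 0 < T p.1 p.2)
    (hper : ∀ p ∈ U, ∀ x : ℝ, u (x + T p.1 p.2) p.1 p.2 = u x p.1 p.2) :
    ∀ p ∈ U, ∀ x : ℝ,
      (fun y : ℝ =>
          deriv (fun a => T a p.2) p.1 * deriv (fun E => u y p.1 E) p.2
            - deriv (fun E => T p.1 E) p.2 * deriv (fun a => u y a p.2) p.1)
        (x + T p.1 p.2)
      = (fun y : ℝ =>
          deriv (fun a => T a p.2) p.1 * deriv (fun E => u y p.1 E) p.2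
            - deriv (fun E => T p.1 E) p.2 * deriv (fun a => u y a p.2) p.1) x :=
  stmt_9_general U hU u hu T hT hper
end

section
/- Let U ⊆ ℝ² be open, let u : ℝ × U → ℝ be continuously differentiable (with continuous partials in all variables), and let T : U → (0,∞) be continuously differentiable with u(x + T(a,E), a, E) = u(x, a, E) for all x ∈ ℝ and (a,E) ∈ U. Define M(a,E) := ∫₀^{T(a,E)} u(x,a,E) dx. Then M is differentiable on U and, for all (a,E) ∈ U, ∫₀^{T(a,E)} (∂ₐT(a,E)·∂_E u(x,a,E) - ∂_E T(a,E)·∂ₐu(x,a,E)) dx = ∂ₐT(a,E)·∂_E M(a,E) - ∂_E T(a,E)·∂ₐM(a,E). -/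
open MeasureTheory intervalIntegral

/-!
By the Leibniz integral rule, `dM = u(T) • dT + ∫₀^T d_{(a,E)} u dx`. Pairing with `dT` through the
bracket `{T, ·}_{a,E}` annihilates the boundary term `u(T) • dT`, since `{T, T}_{a,E} = 0`, and
the bracket commutes with the integral, leaving `∫₀^T {T, u}_{a,E} dx`.
-/

section ParametricIntegral

variable {H E : Type*} [NormedAddCommGroup H] [NormedSpace ℝ H] [LocallyCompactSpace H]
  [NormedAddCommGroup E] [NormedSpace ℝ E]
  {f : H → ℝ → E} {f' : H → ℝ → H →L[ℝ] E}

theorem hasFDerivAt_parametric_intervalIntegral_of_continuous_fderiv (hf : Continuous ↿f)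
    (hf' : Continuous ↿f') (hderiv : ∀ p x, HasFDerivAt (f · x) (f' p x) p) (a b : ℝ) (p₀ : H) :
    HasFDerivAt (fun p => ∫ x in a..b, f p x) (∫ x in a..b, f' p₀ x) p₀ := by
  obtain ⟨K, hKc, hK⟩ := exists_compact_mem_nhds p₀
  obtain ⟨C, hC⟩ := (hKc.prod isCompact_uIcc).exists_bound_of_continuousOn
    (hf'.continuousOn (s := K ×ˢ Set.uIcc a b))
  have hfx (p : H) : Continuous (f p) := hf.comp (Continuous.prodMk_right p)
  refine hasFDerivAt_integral_of_dominated_of_fderiv_le (bound := fun _ => C) hK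
    (.of_forall fun p => (hfx p).aestronglyMeasurable) ((hfx p₀).intervalIntegrable a b)
    (hf'.comp (Continuous.prodMk_right p₀)).aestronglyMeasurable
    (.of_forall fun x hx p hp => hC (p, x) ⟨hp, Set.uIoc_subset_uIcc hx⟩)
    intervalIntegrable_const (.of_forall fun x _ p _ => hderiv p x)

theorem hasStrictFDerivAt_parametric_primitive_of_continuous_fderiv [CompleteSpace E]
    (hf : Continuous ↿f) (hf' : Continuous ↿f') (hderiv : ∀ p x, HasFDerivAt (f · x) (f' p x) p)
    (a b : ℝ) (p₀ : H) :
    HasStrictFDerivAt (fun q : ℝ × H => ∫ x in a..q.1, f q.2 x)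
      (((1 : ℝ →L[ℝ] ℝ).smulRight (f p₀ b)).coprod (∫ x in a..b, f' p₀ x)) (b, p₀) :=
  hasStrictFDerivAt_uncurry_coprod (u := (b, p₀)) (f := fun t p => ∫ x in a..t, f p x)
    (f₁ := fun t p => (1 : ℝ →L[ℝ] ℝ).smulRight (f p t)) (f₂ := fun t p => ∫ x in a..t, f' p x)
    (.of_forall fun q => ((hf.comp (Continuous.prodMk_right q.2)).integral_hasStrictDerivAt
      a q.1).hasDerivAt.hasFDerivAt)
    (.of_forall fun q =>
      hasFDerivAt_parametric_intervalIntegral_of_continuous_fderiv hf hf' hderiv a q.1 q.2)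
    ((ContinuousLinearMap.smulRightL ℝ ℝ E 1).continuous.comp
      (hf.comp continuous_swap)).continuousAt
    (continuous_parametric_intervalIntegral_of_continuous (f := fun q : ℝ × H => f' q.2)
      (hf'.comp (continuous_fst.snd.prodMk continuous_snd)) continuous_fst).continuousAt

theorem hasFDerivAt_parametric_intervalIntegral_upper [CompleteSpace E] {τ : H → ℝ}
    {τ' : H →L[ℝ] ℝ} {p₀ : H} (hτ : HasFDerivAt τ τ' p₀) (hf : Continuous ↿f)
    (hf' : Continuous ↿f') (hderiv : ∀ p x, HasFDerivAt (f · x) (f' p x) p) (a : ℝ) :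
    HasFDerivAt (fun p => ∫ x in a..τ p, f p x)
      (τ'.smulRight (f p₀ (τ p₀)) + ∫ x in a..τ p₀, f' p₀ x) p₀ := by
  have h := (hasStrictFDerivAt_parametric_primitive_of_continuous_fderiv hf hf' hderiv a
    (τ p₀) p₀).hasFDerivAt.comp (f := fun p => (τ p, p)) p₀ (hτ.prodMk (hasFDerivAt_id p₀))
  refine h.congr_fderiv ?_
  ext v
  simp

end ParametricIntegral

theorem ContDiff.hasFDerivAt_parametric_intervalIntegral_upper {H E : Type*}
    [NormedAddCommGroup H] [NormedSpace ℝ H] [LocallyCompactSpace H] [NormedAddCommGroup E]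
    [NormedSpace ℝ E] [CompleteSpace E] {F : ℝ × H → E} (hF : ContDiff ℝ 1 F) {τ : H → ℝ}
    {τ' : H →L[ℝ] ℝ} {p₀ : H} (hτ : HasFDerivAt τ τ' p₀) (a : ℝ) :
    HasFDerivAt (fun p => ∫ x in a..τ p, F (x, p))
      (τ'.smulRight (F (τ p₀, p₀)) + ∫ x in a..τ p₀, (fderiv ℝ F (x, p₀)).comp (.inr ℝ ℝ H)) p₀ :=
  _root_.hasFDerivAt_parametric_intervalIntegral_upper (f := fun p x => F (x, p)) hτ
    (hF.continuous.comp continuous_swap)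
    (((hF.continuous_fderiv one_ne_zero).comp continuous_swap).clm_comp continuous_const)
    (fun p x => (hF.differentiable one_ne_zero (x, p)).hasFDerivAt.comp p
      (hasFDerivAt_prodMk_right x p)) a

theorem HasFDerivAt.deriv_fst_slice {𝕜 F G : Type*} [NontriviallyNormedField 𝕜]
    [NormedAddCommGroup F] [NormedSpace 𝕜 F] [NormedAddCommGroup G] [NormedSpace 𝕜 G]
    {g : 𝕜 × F → G} {g' : 𝕜 × F →L[𝕜] G} {p : 𝕜 × F} (h : HasFDerivAt g g' p) :
    deriv (fun x => g (x, p.2)) p.1 = g' (1, 0) :=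
  (h.comp_hasDerivAt p.1 ((hasDerivAt_id p.1).prodMk (hasDerivAt_const p.1 p.2))).deriv

theorem HasFDerivAt.deriv_snd_slice {𝕜 F G : Type*} [NontriviallyNormedField 𝕜]
    [NormedAddCommGroup F] [NormedSpace 𝕜 F] [NormedAddCommGroup G] [NormedSpace 𝕜 G]
    {g : F × 𝕜 → G} {g' : F × 𝕜 →L[𝕜] G} {p : F × 𝕜} (h : HasFDerivAt g g' p) :
    deriv (fun y => g (p.1, y)) p.2 = g' (0, 1) :=
  (h.comp_hasDerivAt p.2 ((hasDerivAt_const p.2 p.1).prodMk (hasDerivAt_id p.2))).deriv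

theorem intervalIntegral_mul_apply_sub_mul_apply {V : Type*} [NormedAddCommGroup V]
    [NormedSpace ℝ V] {D : ℝ → V →L[ℝ] ℝ} (hD : Continuous D) (a b : ℝ) (τ' : V →L[ℝ] ℝ) (c : ℝ)
    (v w : V) :
    ∫ x in a..b, (τ' v * D x w - τ' w * D x v)
      = τ' v * (τ'.smulRight c + ∫ x in a..b, D x) w
        - τ' w * (τ'.smulRight c + ∫ x in a..b, D x) v := by
  have hDa (z : V) : IntervalIntegrable (D · z) volume a b :=
    (hD.clm_apply continuous_const).intervalIntegrable a b
  simp only [add_apply, ContinuousLinearMap.smulRight_apply,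
    ContinuousLinearMap.intervalIntegral_apply (hD.intervalIntegrable a b), smul_eq_mul,
    integral_sub ((hDa w).const_mul _) ((hDa v).const_mul _), intervalIntegral.integral_const_mul]
  ring

theorem stmt_10_general (U : Set (ℝ × ℝ))
    (u : ℝ → ℝ → ℝ → ℝ)
    (hu : ContDiff ℝ 1 (fun q : ℝ × ℝ × ℝ => u q.1 q.2.1 q.2.2))
    (T : ℝ → ℝ → ℝ)
    (hT : ContDiff ℝ 1 (fun q : ℝ × ℝ => T q.1 q.2)) :
    ∀ p ∈ U,
      DifferentiableAt ℝ (fun q : ℝ × ℝ => ∫ x in (0:ℝ)..(T q.1 q.2), u x q.1 q.2) p ∧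
      (∫ x in (0:ℝ)..(T p.1 p.2),
          (deriv (fun a => T a p.2) p.1 * deriv (fun E => u x p.1 E) p.2
            - deriv (fun E => T p.1 E) p.2 * deriv (fun a => u x a p.2) p.1))
        = deriv (fun a => T a p.2) p.1
            * deriv (fun E => ∫ x in (0:ℝ)..(T p.1 E), u x p.1 E) p.2
          - deriv (fun E => T p.1 E) p.2
            * deriv (fun a => ∫ x in (0:ℝ)..(T a p.2), u x a p.2) p.1 := by
  intro p _
  set F : ℝ × ℝ × ℝ → ℝ := fun q => u q.1 q.2.1 q.2.2
  set D : ℝ → ℝ × ℝ →L[ℝ] ℝ := fun x => (fderiv ℝ F (x, p)).comp (.inr ℝ ℝ (ℝ × ℝ))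
  have hTp := (hT.differentiable one_ne_zero p).hasFDerivAt
  have hM := hu.hasFDerivAt_parametric_intervalIntegral_upper hTp 0
  have hux (x : ℝ) : HasFDerivAt (fun q : ℝ × ℝ => u x q.1 q.2) (D x) p :=
    (hu.differentiable one_ne_zero (x, p)).hasFDerivAt.comp p (hasFDerivAt_prodMk_right x p)
  have hD : Continuous D := (hu.continuous_fderiv one_ne_zero).comp
    (continuous_id.prodMk continuous_const) |>.clm_comp continuous_const
  refine ⟨hM.differentiableAt, ?_⟩
  rw [hTp.deriv_fst_slice, hTp.deriv_snd_slice, hM.deriv_fst_slice, hM.deriv_snd_slice,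
    ← intervalIntegral_mul_apply_sub_mul_apply hD]
  congr 1 with x
  rw [(hux x).deriv_fst_slice, (hux x).deriv_snd_slice]

/-- The pairing identity `⟨φ₀, 1⟩ = {T,M}_{a,E}` for the mass
`M(a,E) = ∫₀^{T(a,E)} u dx` of a periodic family: `M` is differentiable and
`∫₀^T (T_a u_E - T_E u_a) dx = T_a M_E - T_E M_a`. -/
theorem stmt_10 (U : Set (ℝ × ℝ)) (hU : IsOpen U)
    (u : ℝ → ℝ → ℝ → ℝ)
    (hu : ContDiff ℝ 1 (fun q : ℝ × ℝ × ℝ => u q.1 q.2.1 q.2.2))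
    (T : ℝ → ℝ → ℝ)
    (hT : ContDiff ℝ 1 (fun q : ℝ × ℝ => T q.1 q.2))
    (hTpos : ∀ p ∈ U, 0 < T p.1 p.2)
    (hper : ∀ p ∈ U, ∀ x : ℝ, u (x + T p.1 p.2) p.1 p.2 = u x p.1 p.2) :
    ∀ p ∈ U,
      DifferentiableAt ℝ (fun q : ℝ × ℝ => ∫ x in (0:ℝ)..(T q.1 q.2), u x q.1 q.2) p ∧
      (∫ x in (0:ℝ)..(T p.1 p.2),
          (deriv (fun a => T a p.2) p.1 * deriv (fun E => u x p.1 E) p.2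
            - deriv (fun E => T p.1 E) p.2 * deriv (fun a => u x a p.2) p.1))
        = deriv (fun a => T a p.2) p.1
            * deriv (fun E => ∫ x in (0:ℝ)..(T p.1 E), u x p.1 E) p.2
          - deriv (fun E => T p.1 E) p.2
            * deriv (fun a => ∫ x in (0:ℝ)..(T a p.2), u x a p.2) p.1 :=
  stmt_10_general U u hu T hT
end

section
/- Let f : ℝ → ℝ be continuously differentiable, fix a point (a₀,E₀,c₀) ∈ ℝ³ with c₀ ≠ 0, and let u : ℝ × ℝ³ → ℝ be a C³ family such that for all x and all (a,E,c) near (a₀,E₀,c₀), c·∂ₓ²u(x,a,E,c) - (c-1)·u(x,a,E,c) + f(u(x,a,E,c)) = a. Let T, M : ℝ³ → ℝ be differentiable at (a₀,E₀,c₀), and write {T,M}_{α,β} = ∂_αT·∂_βM - ∂_βT·∂_αM (partials evaluated at (a₀,E₀,c₀)). Define φ₂(x) := {T,M}_{E,c}·∂ₐu(x,a₀,E₀,c₀) - {T,M}_{a,c}·∂_E u(x,a₀,E₀,c₀) + {T,M}_{a,E}·∂_c u(x,a₀,E₀,c₀). Then for all x ∈ ℝ: -c₀·φ₂''(x) + (c₀-1)·φ₂(x)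 - f'(u(x,a₀,E₀,c₀))·φ₂(x) = -{T,M}_{E,c} + {T,M}_{a,E}·(∂ₓ²u(x,a₀,E₀,c₀) - u(x,a₀,E₀,c₀)), and consequently ∂ₓ[-c₀φ₂'' + (c₀-1)φ₂ - f'(u)φ₂] = {T,M}_{a,E}·(∂ₓ³u - ∂ₓu). -/
/-!
Differentiating the profile equation `c u'' - (c - 1) u + f(u) = a` along a parameter direction
`w = (w_a, w_E, w_c)` and commuting the parameter derivative with `∂ₓ²` gives
`L (∂_w u) = w_c (u'' - u) - w_a`. The function `φ₂` is `∂_w u` for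
`w = ({T,M}_{E,c}, -{T,M}_{a,c}, {T,M}_{a,E})`, which yields the first identity; the second is
its `x`-derivative.
-/

open Filter Topology

namespace GBBM

variable {E F G : Type*} [NormedAddCommGroup E] [NormedSpace ℝ E]
  [NormedAddCommGroup F] [NormedSpace ℝ F] [NormedAddCommGroup G] [NormedSpace ℝ G]

noncomputable def dirDeriv (w : E) (g : E → G) : E → G := fun p => fderiv ℝ g p w

theorem contDiff_dirDeriv {m n : WithTop ℕ∞} {g : E → G} (hg : ContDiff ℝ n g)
    (hmn : m + 1 ≤ n) (w : E) : ContDiff ℝ m (dirDeriv w g) :=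
  (ContinuousLinearMap.apply ℝ G w).contDiff.comp (hg.fderiv_right hmn)

theorem dirDeriv_dirDeriv {g : E → G} {p : E} (hg : DifferentiableAt ℝ (fderiv ℝ g) p)
    (v w : E) : dirDeriv v (dirDeriv w g) p = fderiv ℝ (fderiv ℝ g) p v w := by
  change fderiv ℝ (fun q => fderiv ℝ g q w) p v = _
  simp [fderiv_clm_apply hg (differentiableAt_const w)]

theorem dirDeriv_comm {g : E → G} (hg : ContDiff ℝ 2 g) (v w p : E) :
    dirDeriv v (dirDeriv w g) p = dirDeriv w (dirDeriv v g) p := by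
  have hd : DifferentiableAt ℝ (fderiv ℝ g) p :=
    (hg.fderiv_right (m := 1) le_rfl).differentiable one_ne_zero p
  rw [dirDeriv_dirDeriv hd, dirDeriv_dirDeriv hd]
  exact hg.contDiffAt.isSymmSndFDerivAt (by simp) v w

theorem dirDeriv_comm_dirDeriv_dirDeriv {g : E → G} (hg : ContDiff ℝ 3 g) (u w p : E) :
    dirDeriv w (dirDeriv u (dirDeriv u g)) p = dirDeriv u (dirDeriv u (dirDeriv w g)) p := by
  rw [dirDeriv_comm (contDiff_dirDeriv hg (by norm_num) u)]
  congr 1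
  exact funext (dirDeriv_comm (hg.of_le (by norm_num)) w u)

theorem deriv_comp_eq_dirDeriv {g : E → G} {γ : ℝ → E} {w : E} {t : ℝ}
    (hg : DifferentiableAt ℝ g (γ t)) (hγ : HasDerivAt γ w t) :
    deriv (fun s => g (γ s)) t = dirDeriv w g (γ t) :=
  (hg.hasFDerivAt.comp_hasDerivAt t hγ).deriv

theorem deriv_slice {g : ℝ × F → G} (hg : Differentiable ℝ g) (p : F) :
    deriv (fun y => g (y, p)) = fun y => dirDeriv (1, 0) g (y, p) :=
  funext fun y => deriv_comp_eq_dirDeriv (hg _) ((hasDerivAt_id' y).prodMk (hasDerivAt_const y p))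

theorem deriv_deriv_slice {g : ℝ × F → G} (hg : ContDiff ℝ 2 g) (p : F) :
    deriv (deriv fun y => g (y, p)) = fun y => dirDeriv (1, 0) (dirDeriv (1, 0) g) (y, p) := by
  rw [deriv_slice (hg.differentiable two_ne_zero),
    deriv_slice ((contDiff_dirDeriv hg le_rfl _).differentiable one_ne_zero)]


theorem dirDeriv_eq_partials {g : ℝ × ℝ × ℝ × ℝ → G} {x a e c : ℝ}
    (hg : DifferentiableAt ℝ g (x, a, e, c)) (wa we wc : ℝ) :
    dirDeriv (0, wa, we, wc) g (x, a, e, c) = wa • deriv (fun t => g (x, t, e, c)) a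
      + we • deriv (fun t => g (x, a, t, c)) e + wc • deriv (fun t => g (x, a, e, t)) c := by
  have hx (t : ℝ) : HasDerivAt (fun _ : ℝ => x) 0 t := hasDerivAt_const t x
  rw [deriv_comp_eq_dirDeriv hg ((hx a).prodMk ((hasDerivAt_id' a).prodMk
      ((hasDerivAt_const a e).prodMk (hasDerivAt_const a c)))),
    deriv_comp_eq_dirDeriv hg ((hx e).prodMk ((hasDerivAt_const e a).prodMk
      ((hasDerivAt_id' e).prodMk (hasDerivAt_const e c)))),
    deriv_comp_eq_dirDeriv hg ((hx c).prodMk ((hasDerivAt_const c a).prodMk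
      ((hasDerivAt_const c e).prodMk (hasDerivAt_id' c))))]
  have hw : ((0, wa, we, wc) : ℝ × ℝ × ℝ × ℝ)
      = wa • (0, 1, 0, 0) + we • (0, 0, 1, 0) + wc • (0, 0, 0, 1) := by
    simp
  simp only [dirDeriv, hw, map_add, map_smul]

noncomputable def linearizedOp (f : ℝ → ℝ) (c : ℝ) (U φ : ℝ → ℝ) : ℝ → ℝ :=
  fun y => -c * deriv (deriv φ) y + (c - 1) * φ y - deriv f (U y) * φ y

theorem linearizedOp_dirDeriv {f : ℝ → ℝ} (hf : Differentiable ℝ f)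
    {v : ℝ × ℝ × ℝ × ℝ → ℝ} (hv : ContDiff ℝ 3 v) {q₀ : ℝ × ℝ × ℝ}
    (hode : ∀ᶠ q : ℝ × ℝ × ℝ in 𝓝 q₀, ∀ x : ℝ,
      q.2.2 * deriv (deriv fun y => v (y, q)) x - (q.2.2 - 1) * v (x, q) + f (v (x, q)) = q.1)
    (w : ℝ × ℝ × ℝ) (x : ℝ) :
    linearizedOp f q₀.2.2 (fun y => v (y, q₀)) (fun y => dirDeriv (0, w) v (y, q₀)) x
      = w.2.2 * (deriv (deriv fun y => v (y, q₀)) x - v (x, q₀)) - w.1 := by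
  have hv2 : ContDiff ℝ 2 v := hv.of_le (by norm_num)
  set vxx := dirDeriv (1, 0) (dirDeriv (1, 0) v) with hvxx_def
  have hvxx : Differentiable ℝ vxx :=
    (contDiff_dirDeriv (contDiff_dirDeriv hv (m := 2) (by norm_num) _) le_rfl _).differentiable
      one_ne_zero
  have hv1 : Differentiable ℝ v := hv.differentiable (by norm_num)
  have hc : HasFDerivAt (fun p : ℝ × ℝ × ℝ × ℝ => p.2.2.2) (_ : ℝ × ℝ × ℝ × ℝ →L[ℝ] ℝ) (x, q₀) :=
    (hasFDerivAt_id _).snd.snd.snd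
  have ha : HasFDerivAt (fun p : ℝ × ℝ × ℝ × ℝ => p.2.1) (_ : ℝ × ℝ × ℝ × ℝ →L[ℝ] ℝ) (x, q₀) :=
    (hasFDerivAt_id _).snd.fst
  have hR := (((hc.mul (hvxx _).hasFDerivAt).sub ((hc.sub_const 1).mul (hv1 _).hasFDerivAt)).add
    ((hf _).hasDerivAt.comp_hasFDerivAt _ (hv1 _).hasFDerivAt)).sub ha
  -- The residual of the profile equation vanishes near `(x, q₀)`, hence so does its derivative.
  have hzero : (fun p : ℝ × ℝ × ℝ × ℝ => p.2.2.2 * vxx p - (p.2.2.2 - 1) * v p + f (v p) - p.2.1)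
      =ᶠ[𝓝 (x, q₀)] fun _ => 0 := by
    have hto : Tendsto Prod.snd (𝓝 (x, q₀)) (𝓝 q₀) := continuous_snd.continuousAt
    filter_upwards [hto.eventually hode] with p hp
    rw [hvxx_def, ← congrFun (deriv_deriv_slice hv2 p.2) p.1, sub_eq_zero]
    exact hp p.1
  have hlin : q₀.2.2 * dirDeriv (0, w) vxx (x, q₀) + vxx (x, q₀) * w.2.2
      - ((q₀.2.2 - 1) * dirDeriv (0, w) v (x, q₀) + v (x, q₀) * w.2.2)
      + deriv f (v (x, q₀)) * dirDeriv (0, w) v (x, q₀) - w.1 = 0 := by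
    simpa [dirDeriv] using DFunLike.congr_fun
      (hR.unique ((hasFDerivAt_const 0 _).congr_of_eventuallyEq hzero)) (0, w)
  rw [hvxx_def, dirDeriv_comm_dirDeriv_dirDeriv hv] at hlin
  simp only [linearizedOp, deriv_deriv_slice hv2,
    deriv_deriv_slice (contDiff_dirDeriv hv (by norm_num) _)]
  linear_combination -hlin

end GBBM

open GBBM

theorem stmt_11_general (f : ℝ → ℝ) (hf : ContDiff ℝ 1 f)
    (a₀ E₀ c₀ : ℝ)
    (u : ℝ → ℝ → ℝ → ℝ → ℝ)
    (hu : ContDiff ℝ 3 (fun q : ℝ × ℝ × ℝ × ℝ => u q.1 q.2.1 q.2.2.1 q.2.2.2))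
    (hode : ∀ᶠ q : ℝ × ℝ × ℝ in nhds (a₀, E₀, c₀), ∀ x : ℝ,
      q.2.2 * deriv (deriv (fun y => u y q.1 q.2.1 q.2.2)) x
        - (q.2.2 - 1) * u x q.1 q.2.1 q.2.2 + f (u x q.1 q.2.1 q.2.2) = q.1)
    (T M : ℝ → ℝ → ℝ → ℝ) :
    let TMEc := deriv (fun t => T a₀ t c₀) E₀ * deriv (fun t => M a₀ E₀ t) c₀
      - deriv (fun t => T a₀ E₀ t) c₀ * deriv (fun t => M a₀ t c₀) E₀
    let TMac := deriv (fun t => T t E₀ c₀) a₀ * deriv (fun t => M a₀ E₀ t) c₀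
      - deriv (fun t => T a₀ E₀ t) c₀ * deriv (fun t => M t E₀ c₀) a₀
    let TMaE := deriv (fun t => T t E₀ c₀) a₀ * deriv (fun t => M a₀ t c₀) E₀
      - deriv (fun t => T a₀ t c₀) E₀ * deriv (fun t => M t E₀ c₀) a₀
    let φ : ℝ → ℝ := fun y => TMEc * deriv (fun t => u y t E₀ c₀) a₀
      - TMac * deriv (fun t => u y a₀ t c₀) E₀
      + TMaE * deriv (fun t => u y a₀ E₀ t) c₀
    ∀ x : ℝ,
      (-c₀ * deriv (deriv φ) x + (c₀ - 1) * φ x - deriv f (u x a₀ E₀ c₀) * φ x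
        = -TMEc + TMaE * (deriv (deriv (fun y => u y a₀ E₀ c₀)) x - u x a₀ E₀ c₀)) ∧
      deriv (fun y => -c₀ * deriv (deriv φ) y + (c₀ - 1) * φ y
          - deriv f (u y a₀ E₀ c₀) * φ y) x
        = TMaE * (deriv (deriv (deriv (fun y => u y a₀ E₀ c₀))) x
            - deriv (fun y => u y a₀ E₀ c₀) x) := by
  intro TMEc TMac TMaE φ
  set v : ℝ × ℝ × ℝ × ℝ → ℝ := fun q => u q.1 q.2.1 q.2.2.1 q.2.2.2
  set U : ℝ → ℝ := fun y => u y a₀ E₀ c₀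
  have hφ : φ = fun y => dirDeriv (0, TMEc, -TMac, TMaE) v (y, a₀, E₀, c₀) := by
    funext y
    rw [dirDeriv_eq_partials (hu.differentiable (by norm_num) _)]
    simp only [φ, v, smul_eq_mul]
    ring
  have hL : linearizedOp f c₀ U φ = fun y => -TMEc + TMaE * (deriv (deriv U) y - U y) := by
    funext y
    rw [hφ, linearizedOp_dirDeriv (hf.differentiable one_ne_zero) hu hode]
    ring
  have hU : ContDiff ℝ 3 U := hu.comp (contDiff_id.prodMk contDiff_const :
    ContDiff ℝ 3 fun y : ℝ => ((y, a₀, E₀, c₀) : ℝ × ℝ × ℝ × ℝ))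
  have hU' : Differentiable ℝ (deriv (deriv U)) :=
    (hU.iterate_deriv' 1 2).differentiable one_ne_zero
  refine fun x => ⟨congrFun hL x, ?_⟩
  change deriv (linearizedOp f c₀ U φ) x = _
  rw [hL]
  simp [hU'.differentiableAt, (hU.differentiable (by norm_num)).differentiableAt]

/-- The Jordan chain identity: with
`φ₂ = {T,M}_{E,c} u_a - {T,M}_{a,c} u_E + {T,M}_{a,E} u_c`, one has
`L φ₂ = -{T,M}_{E,c} + {T,M}_{a,E} (u_xx - u)` and hence
`∂ₓ (L φ₂) = {T,M}_{a,E} (u_xxx - u_x)`, i.e. `A φ₂ = -φ₁`. -/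
theorem stmt_11 (f : ℝ → ℝ) (hf : ContDiff ℝ 1 f)
    (a₀ E₀ c₀ : ℝ) (hc₀ : c₀ ≠ 0)
    (u : ℝ → ℝ → ℝ → ℝ → ℝ)
    (hu : ContDiff ℝ 3 (fun q : ℝ × ℝ × ℝ × ℝ => u q.1 q.2.1 q.2.2.1 q.2.2.2))
    (hode : ∀ᶠ q : ℝ × ℝ × ℝ in nhds (a₀, E₀, c₀), ∀ x : ℝ,
      q.2.2 * deriv (deriv (fun y => u y q.1 q.2.1 q.2.2)) x
        - (q.2.2 - 1) * u x q.1 q.2.1 q.2.2 + f (u x q.1 q.2.1 q.2.2) = q.1)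
    (T M : ℝ → ℝ → ℝ → ℝ)
    (hT : DifferentiableAt ℝ (fun q : ℝ × ℝ × ℝ => T q.1 q.2.1 q.2.2) (a₀, E₀, c₀))
    (hM : DifferentiableAt ℝ (fun q : ℝ × ℝ × ℝ => M q.1 q.2.1 q.2.2) (a₀, E₀, c₀)) :
    let TMEc := deriv (fun t => T a₀ t c₀) E₀ * deriv (fun t => M a₀ E₀ t) c₀
      - deriv (fun t => T a₀ E₀ t) c₀ * deriv (fun t => M a₀ t c₀) E₀
    let TMac := deriv (fun t => T t E₀ c₀) a₀ * deriv (fun t => M a₀ E₀ t) c₀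
      - deriv (fun t => T a₀ E₀ t) c₀ * deriv (fun t => M t E₀ c₀) a₀
    let TMaE := deriv (fun t => T t E₀ c₀) a₀ * deriv (fun t => M a₀ t c₀) E₀
      - deriv (fun t => T a₀ t c₀) E₀ * deriv (fun t => M t E₀ c₀) a₀
    let φ : ℝ → ℝ := fun y => TMEc * deriv (fun t => u y t E₀ c₀) a₀
      - TMac * deriv (fun t => u y a₀ t c₀) E₀
      + TMaE * deriv (fun t => u y a₀ E₀ t) c₀
    ∀ x : ℝ,
      (-c₀ * deriv (deriv φ) x + (c₀ - 1) * φ x - deriv f (u x a₀ E₀ c₀) * φ x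
        = -TMEc + TMaE * (deriv (deriv (fun y => u y a₀ E₀ c₀)) x - u x a₀ E₀ c₀)) ∧
      deriv (fun y => -c₀ * deriv (deriv φ) y + (c₀ - 1) * φ y
          - deriv f (u y a₀ E₀ c₀) * φ y) x
        = TMaE * (deriv (deriv (deriv (fun y => u y a₀ E₀ c₀))) x
            - deriv (fun y => u y a₀ E₀ c₀) x) :=
  stmt_11_general f hf a₀ E₀ c₀ u hu hode T M
end

section
/- Let c > 0, let I ⊆ ℝ be an open interval, let V : ℝ → ℝ be continuously differentiable, and let u₋, u₊ : I → ℝ be continuously differentiable functions with u₋(E) < u₊(E), V(u₋(E)) = V(u₊(E)) = E, V(y) < E for all y ∈ (u₋(E), u₊(E)), and V'(u₋(E)) ≠ 0 ≠ V'(u₊(E)), for every E ∈ I. Assume y ↦ (E - V(y))^{-1/2} is integrable on (u₋(E), u₊(E)) for each E ∈ I. Then the classical action K(E) := 2√(2/c) ∫_{u₋(E)}^{u₊(E)} √(E - V(y)) dy is differentiable on I, and K'(E) = (1/c)·T(E), where T(E) := √(2c) ∫_{u₋(E)}^{u₊(E)} (E - V(y))^{-1/2} dy. -/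
/-!
Fix `E₀` and choose `E₁ > E₀` close to it; put `a = u₋(E₁)`, `b = u₊(E₁)`. For `E ≤ E₁` the
points between `u₋(E)` and `a` (and between `u₊(E)` and `b`) are turning points `u±(e)` with
`e ∈ [E, E₁]`, so `V ≥ E` there and the truncated square root `√(E - V)` vanishes: near `E₀`,
`K(E)` is an integral over the fixed window `[a, b]`. On that window we differentiate under the
integral sign with the Lipschitz bound `|√(E - V) - √(E₀ - V)| ≤ |E - E₀| / √|E₀ - V|`. The bound
is integrable: on `[u₋(E₀), u₊(E₀)]` it is the period integrand, and near the nondegenerate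
turning points `|E₀ - V(y)| ≥ m |y - u±(E₀)|`. The same estimate shows that `V = E₀` only at the
two turning points of the window, so `E ↦ √(E - V(y))` has derivative `1 / (2√(E₀ - V(y)))` for
almost every `y`.
-/

open MeasureTheory intervalIntegral Set Filter Topology

theorem abs_sqrt_sub_sqrt_le {x y : ℝ} (hy : y ≠ 0) :
    |√x - √y| ≤ (√|y|)⁻¹ * |x - y| := by
  rw [inv_mul_eq_div, le_div_iff₀ (Real.sqrt_pos.2 (abs_pos.2 hy))]
  rcases hy.lt_or_gt with hy | hy
  · rw [Real.sqrt_eq_zero'.2 hy.le, sub_zero, abs_of_nonneg (Real.sqrt_nonneg x),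
      abs_of_neg hy]
    rcases le_or_gt x 0 with hx | hx
    · simp [Real.sqrt_eq_zero'.2 hx]
    · rw [← Real.sqrt_mul hx.le]
      nlinarith [Real.sq_sqrt (mul_nonneg hx.le (neg_nonneg.2 hy.le)),
        Real.sqrt_nonneg (x * -y), abs_nonneg (x - y), le_abs_self (x - y)]
  · rw [abs_of_pos hy]
    calc |√x - √y| * √y ≤ |√x - √y| * (√x + √y) := by
          gcongr; linarith [Real.sqrt_nonneg x]
      _ = |max x 0 - y| := by
          rw [← abs_of_nonneg (add_nonneg (Real.sqrt_nonneg x) (Real.sqrt_nonneg y)), ← abs_mul,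
            show (√x - √y) * (√x + √y) = √x ^ 2 - √y ^ 2 by ring, Real.sq_sqrt',
            Real.sq_sqrt hy.le]
      _ ≤ |x - y| := by
          rcases le_total x 0 with hx | hx
          · rw [max_eq_right hx, abs_of_neg (by linarith), abs_of_neg (by linarith)]; linarith
          · rw [max_eq_left hx]

-- For `x < v` both sides vanish: `√` truncates at `0` and `0⁻¹ = 0`.
theorem hasDerivAt_sqrt_sub_const {v x : ℝ} (h : v ≠ x) :
    HasDerivAt (fun y => √(y - v)) (2 * √(x - v))⁻¹ x := by
  rcases h.lt_or_gt with h | h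
  · simpa using ((hasDerivAt_id x).sub_const v).sqrt (sub_pos.2 h).ne'
  · rw [Real.sqrt_eq_zero'.2 (by linarith), mul_zero, inv_zero]
    refine (hasDerivAt_const x (0 : ℝ)).congr_of_eventuallyEq ?_
    filter_upwards [Iio_mem_nhds h] with y hy
    exact Real.sqrt_eq_zero'.2 (by linarith [show y < v from hy])

theorem Real.sqrt_div_eq_sqrt_mul_div {x : ℝ} (hx : 0 ≤ x) (c : ℝ) :
    √(x / c) = √(x * c) / c := by
  rw [Real.sqrt_div hx, Real.sqrt_mul hx, mul_div_assoc, Real.sqrt_div_self, div_eq_mul_inv]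

theorem HasDerivAt.eventually_mul_abs_sub_le {f : ℝ → ℝ} {d z m : ℝ} (h : HasDerivAt f d z)
    (hm : m < |d|) : ∀ᶠ y in 𝓝 z, m * |y - z| ≤ |f y - f z| := by
  filter_upwards [h.isLittleO.def (sub_pos.2 hm)] with y hy
  rw [Real.norm_eq_abs, Real.norm_eq_abs, smul_eq_mul] at hy
  have := abs_sub_abs_le_abs_sub ((y - z) * d) (f y - f z)
  rw [abs_mul, abs_sub_comm ((y - z) * d)] at this
  nlinarith [abs_nonneg (y - z)]

theorem ContinuousAt.eventually_uIcc_subset {f : ℝ → ℝ} {x : ℝ} {s : Set ℝ}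
    (hf : ContinuousAt f x) (hs : s ∈ 𝓝 (f x)) : ∀ᶠ x' in 𝓝 x, uIcc (f x') (f x) ⊆ s := by
  obtain ⟨l, u, hfx, hsub⟩ := mem_nhds_iff_exists_Ioo_subset.1 hs
  filter_upwards [hf (Ioo_mem_nhds hfx.1 hfx.2)] with x' hx'
  exact (ordConnected_Ioo.uIcc_subset hx' hfx).trans hsub

theorem exists_gt_eventually_Icc_subset {s : Set ℝ} {x : ℝ} (hs : s ∈ 𝓝 x) :
    ∃ x₁, x < x₁ ∧ ∀ᶠ y in 𝓝 x, y ≤ x₁ ∧ Icc y x₁ ⊆ s := by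
  obtain ⟨l, u, hx, hsub⟩ := mem_nhds_iff_exists_Ioo_subset.1 hs
  obtain ⟨x₁, hx₁, hx₁u⟩ := exists_between hx.2
  refine ⟨x₁, hx₁, ?_⟩
  filter_upwards [Ioo_mem_nhds hx.1 hx₁] with y hy
  exact ⟨hy.2.le, (Icc_subset_Ioo hy.1 hx₁u).trans hsub⟩

theorem intervalIntegrable_abs_rpow {r : ℝ} (hr : -1 < r) (a b : ℝ) :
    IntervalIntegrable (fun x => |x| ^ r) volume a b := by
  have hpos : ∀ t, 0 ≤ t → IntervalIntegrable (fun x => |x| ^ r) volume 0 t := fun t ht =>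
    (intervalIntegrable_rpow' hr).congr fun x hx => by
      rw [uIoc_of_le ht] at hx
      simp only [abs_of_pos hx.1]
  have h0 : ∀ t, IntervalIntegrable (fun x => |x| ^ r) volume 0 t := by
    intro t
    rcases le_total 0 t with ht | ht
    · exact hpos t ht
    · simpa using (hpos (-t) (neg_nonneg.2 ht)).comp_sub_left 0
  exact (h0 a).symm.trans (h0 b)

theorem hasDerivAt_integral_of_dominated_loc_of_lip' {α : Type*} [MeasurableSpace α]
    {μ : Measure α} {F : ℝ → α → ℝ} {F' bound : α → ℝ} {x₀ : ℝ} {s : Set ℝ} (hs : s ∈ 𝓝 x₀)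
    (hF_meas : ∀ x ∈ s, AEStronglyMeasurable (F x) μ) (hF_int : Integrable (F x₀) μ)
    (hF'_meas : AEStronglyMeasurable F' μ)
    (h_lipsch : ∀ᵐ a ∂μ, ∀ x ∈ s, |F x a - F x₀ a| ≤ bound a * |x - x₀|)
    (bound_integrable : Integrable bound μ) (h_diff : ∀ᵐ a ∂μ, HasDerivAt (F · a) (F' a) x₀) :
    HasDerivAt (fun x => ∫ a, F x a ∂μ) (∫ a, F' a ∂μ) x₀ := by
  let L : ℝ →L[ℝ] ℝ →L[ℝ] ℝ := ContinuousLinearMap.toSpanSingletonCLE (𝕜 := ℝ) (E := ℝ)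
  have hL_meas : AEStronglyMeasurable (fun a => L (F' a)) μ :=
    L.continuous.comp_aestronglyMeasurable hF'_meas
  obtain ⟨hint, hderiv⟩ := hasFDerivAt_integral_of_dominated_loc_of_lip' hs hF_meas hF_int
    hL_meas h_lipsch bound_integrable h_diff
  have hF'_int : Integrable F' μ := by
    rw [← integrable_norm_iff hL_meas] at hint
    rw [← integrable_norm_iff hF'_meas]
    exact hint.congr (.of_forall fun a => ContinuousLinearMap.norm_toSpanSingleton (F' a))
  rw [hasDerivAt_iff_hasFDerivAt]
  rwa [L.integral_comp_comm hF'_int] at hderiv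

theorem hasDerivAt_integral_sqrt_sub {V : ℝ → ℝ} (hV : Continuous V) {a b E : ℝ}
    (hbound : IntegrableOn (fun y => (√|E - V y|)⁻¹) (uIcc a b))
    (hae : ∀ᵐ y ∂volume.restrict (uIcc a b), V y ≠ E) :
    HasDerivAt (fun x => ∫ y in a..b, √(x - V y)) (∫ y in a..b, (2 * √(E - V y))⁻¹) E := by
  have hcont : ∀ x, Continuous fun y => √(x - V y) := fun x => by fun_prop
  have hae' := ae_restrict_of_ae_restrict_of_subset uIoc_subset_uIcc hae
  simp only [intervalIntegral_eq_integral_uIoc]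
  refine (hasDerivAt_integral_of_dominated_loc_of_lip' univ_mem
    (fun x _ => (hcont x).aestronglyMeasurable) (hcont E).integrableOn_uIoc
    (continuous_const.mul (hcont E)).measurable.inv.aestronglyMeasurable ?_
    (hbound.mono_set uIoc_subset_uIcc) ?_).const_smul (if a ≤ b then (1 : ℝ) else -1)
  · filter_upwards [hae'] with y hy x _
    simpa using abs_sqrt_sub_sqrt_le (x := x - V y) (sub_ne_zero.2 hy.symm)
  · filter_upwards [hae'] with y hy using hasDerivAt_sqrt_sub_const hy

theorem integrableOn_inv_sqrt_abs_sub_of_mul_abs_sub_le {V : ℝ → ℝ} (hV : Continuous V)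
    {m E a z : ℝ} (hm : 0 < m) (h : ∀ y ∈ uIcc a z, m * |y - z| ≤ |V y - E|) :
    IntegrableOn (fun y => (√|E - V y|)⁻¹) (uIcc a z) := by
  have hdom : IntegrableOn (fun y => (√m)⁻¹ * |y - z| ^ (-(1 / 2) : ℝ)) (uIcc a z) := by
    rw [← intervalIntegrable_iff']
    simpa using ((intervalIntegrable_abs_rpow (by norm_num) (a - z) 0).comp_sub_right z).const_mul
      (√m)⁻¹
  have hz : ∀ᵐ y ∂volume.restrict (uIcc a z), y ≠ z :=
    ae_restrict_of_ae (measure_eq_zero_iff_ae_notMem.1 Real.volume_singleton)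
  refine hdom.mono' (by fun_prop) ?_
  filter_upwards [ae_restrict_mem measurableSet_uIcc, hz] with y hy hyz
  have hyz' : 0 < |y - z| := abs_pos.2 (sub_ne_zero.2 hyz)
  rw [Real.norm_eq_abs, abs_of_nonneg (inv_nonneg.2 (Real.sqrt_nonneg _)), Real.rpow_neg hyz'.le,
    ← Real.sqrt_eq_rpow, ← mul_inv, ← Real.sqrt_mul hm.le, abs_sub_comm]
  exact inv_anti₀ (by positivity) (Real.sqrt_le_sqrt (h y hy))

theorem integrableOn_inv_sqrt_abs_sub_uIcc {V : ℝ → ℝ} (hV : Continuous V) {m E p P a b : ℝ}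
    (hm : 0 < m) (hpP : p ≤ P) (hbelow : ∀ y ∈ Ioo p P, V y < E)
    (hint : IntervalIntegrable (fun y => 1 / √(E - V y)) volume p P)
    (hp : ∀ y ∈ uIcc a p, m * |y - p| ≤ |V y - E|)
    (hP : ∀ y ∈ uIcc b P, m * |y - P| ≤ |V y - E|) :
    IntegrableOn (fun y => (√|E - V y|)⁻¹) (uIcc a b) := by
  have hmid : IntegrableOn (fun y => (√|E - V y|)⁻¹) (uIcc p P) := by
    rw [← intervalIntegrable_iff']
    refine hint.congr_uIoo fun y hy => ?_
    rw [uIoo_of_le hpP] at hy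
    simp only [abs_of_pos (sub_pos.2 (hbelow y hy)), one_div]
  have hleft := integrableOn_inv_sqrt_abs_sub_of_mul_abs_sub_le hV hm hp
  have hright := integrableOn_inv_sqrt_abs_sub_of_mul_abs_sub_le hV hm hP
  rw [uIcc_comm] at hright
  exact (hleft.union (hmid.union hright)).mono_set
    (uIcc_subset_uIcc_union_uIcc.trans (union_subset_union_right _ uIcc_subset_uIcc_union_uIcc))

theorem ae_restrict_uIcc_ne {V : ℝ → ℝ} {m E p P a b : ℝ}
    (hm : 0 < m) (hpP : p ≤ P) (hbelow : ∀ y ∈ Ioo p P, V y < E)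
    (hp : ∀ y ∈ uIcc a p, m * |y - p| ≤ |V y - E|)
    (hP : ∀ y ∈ uIcc b P, m * |y - P| ≤ |V y - E|) :
    ∀ᵐ y ∂volume.restrict (uIcc a b), V y ≠ E := by
  have hnull : ∀ᵐ y ∂volume.restrict (uIcc a b), y ∉ ({p, P} : Set ℝ) :=
    ae_restrict_of_ae (measure_eq_zero_iff_ae_notMem.1 ((toFinite _).measure_zero _))
  have hside : ∀ z y, m * |y - z| ≤ |V y - E| → y ≠ z → V y ≠ E := fun z y h hyz hVy => by
    have : 0 < m * |y - z| := mul_pos hm (abs_pos.2 (sub_ne_zero.2 hyz))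
    rw [hVy, sub_self, abs_zero] at h
    linarith
  filter_upwards [ae_restrict_mem measurableSet_uIcc, hnull] with y hy hyZ
  simp only [mem_insert_iff, mem_singleton_iff, not_or] at hyZ
  rcases uIcc_subset_uIcc_union_uIcc hy with hy | hy
  · exact hside p y (hp y hy) hyZ.1
  rcases uIcc_subset_uIcc_union_uIcc hy with hy | hy
  · rw [uIcc_of_le hpP] at hy
    exact (hbelow y ⟨hy.1.lt_of_ne' hyZ.1, hy.2.lt_of_ne hyZ.2⟩).ne
  · exact hside P y (hP y (uIcc_comm P b ▸ hy)) hyZ.2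

theorem integral_eq_of_eqOn_zero {f : ℝ → ℝ} {a b a' b' : ℝ}
    (hf : IntervalIntegrable f volume a b) (ha : EqOn f 0 (uIcc a' a))
    (hb : EqOn f 0 (uIcc b b')) :
    ∫ x in a'..b', f x = ∫ x in a..b, f x := by
  have ha' : IntervalIntegrable f volume a' a :=
    intervalIntegrable_const.congr fun x hx => (ha (uIoc_subset_uIcc hx)).symm
  have hb' : IntervalIntegrable f volume b b' :=
    intervalIntegrable_const.congr fun x hx => (hb (uIoc_subset_uIcc hx)).symm
  rw [← integral_add_adjacent_intervals ha' (hf.trans hb'),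
    ← integral_add_adjacent_intervals hf hb', integral_congr ha, integral_congr hb]
  simp

theorem le_of_mem_uIcc_of_leftInvOn {V u : ℝ → ℝ} {I : Set ℝ} {E E₁ : ℝ} (hE : E ≤ E₁)
    (hI : Icc E E₁ ⊆ I) (hu : ContinuousOn u I) (hVu : LeftInvOn V u I) {y : ℝ}
    (hy : y ∈ uIcc (u E) (u E₁)) : E ≤ V y := by
  obtain ⟨e, he, rfl⟩ := intermediate_value_uIcc (hu.mono ((uIcc_of_le hE).trans_subset hI)) hy
  rw [uIcc_of_le hE] at he
  rw [hVu (hI he)]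
  exact he.1

theorem integral_eq_of_leftInvOn {V u w f : ℝ → ℝ} {I : Set ℝ} {E E₁ : ℝ} (hE : E ≤ E₁)
    (hI : Icc E E₁ ⊆ I) (hu : ContinuousOn u I) (hw : ContinuousOn w I)
    (hVu : LeftInvOn V u I) (hVw : LeftInvOn V w I) (hf : ∀ y, E ≤ V y → f y = 0)
    (hint : IntervalIntegrable f volume (u E) (w E)) :
    ∫ y in u E₁..w E₁, f y = ∫ y in u E..w E, f y :=
  integral_eq_of_eqOn_zero hint
    (fun y hy => hf y (le_of_mem_uIcc_of_leftInvOn hE hI hu hVu (uIcc_comm (u E₁) _ ▸ hy)))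
    (fun y hy => hf y (le_of_mem_uIcc_of_leftInvOn hE hI hw hVw hy))

theorem exists_window_of_leftInvOn {V u w : ℝ → ℝ} {I : Set ℝ} (hI : IsOpen I)
    (hu : ContinuousOn u I) (hw : ContinuousOn w I) (hVu : LeftInvOn V u I)
    (hVw : LeftInvOn V w I) {E₀ : ℝ} (hE₀ : E₀ ∈ I) {Nu Nw : Set ℝ} (hNu : Nu ∈ 𝓝 (u E₀))
    (hNw : Nw ∈ 𝓝 (w E₀)) :
    ∃ E₁, uIcc (u E₁) (u E₀) ⊆ Nu ∧ uIcc (w E₁) (w E₀) ⊆ Nw ∧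
      ∀ᶠ E in 𝓝 E₀, ∀ f : ℝ → ℝ, (∀ y, E ≤ V y → f y = 0) →
        IntervalIntegrable f volume (u E) (w E) →
          ∫ y in u E₁..w E₁, f y = ∫ y in u E..w E, f y := by
  have hI₀ : ∀ᶠ E in 𝓝 E₀, E ∈ I := hI.mem_nhds hE₀
  obtain ⟨E₁, hE₀E₁, hwin⟩ := exists_gt_eventually_Icc_subset <| hI₀.and <|
    ((hu.continuousAt hI₀).eventually_uIcc_subset hNu).and
      ((hw.continuousAt hI₀).eventually_uIcc_subset hNw)
  obtain ⟨-, hsideu, hsidew⟩ := hwin.self_of_nhds.2 ⟨hE₀E₁.le, le_rfl⟩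
  refine ⟨E₁, hsideu, hsidew, ?_⟩
  filter_upwards [hwin] with E hE f hf hfi
  exact integral_eq_of_leftInvOn hE.1 (fun e he => (hE.2 he).1) hu hw hVu hVw hf hfi

theorem stmt_12_general (c : ℝ)
    (I : Set ℝ) (hI : IsOpen I)
    (V : ℝ → ℝ) (hV : ContDiff ℝ 1 V)
    (um up : ℝ → ℝ) (hum : ContDiffOn ℝ 1 um I) (hup : ContDiffOn ℝ 1 up I)
    (hlt : ∀ E ∈ I, um E < up E)
    (hVm : ∀ E ∈ I, V (um E) = E) (hVp : ∀ E ∈ I, V (up E) = E)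
    (hbelow : ∀ E ∈ I, ∀ y ∈ Set.Ioo (um E) (up E), V y < E)
    (hV'm : ∀ E ∈ I, deriv V (um E) ≠ 0) (hV'p : ∀ E ∈ I, deriv V (up E) ≠ 0)
    (hint : ∀ E ∈ I,
      IntervalIntegrable (fun y => 1 / Real.sqrt (E - V y)) volume (um E) (up E)) :
    ∀ E ∈ I,
      HasDerivAt
        (fun E' => 2 * Real.sqrt (2 / c) * ∫ y in um E'..up E', Real.sqrt (E' - V y))
        ((Real.sqrt (2 * c) * ∫ y in um E..up E, 1 / Real.sqrt (E - V y)) / c) E := by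
  intro E₀ hE₀
  have hVc : Continuous V := hV.continuous
  have hd₀ : 0 < min |deriv V (um E₀)| |deriv V (up E₀)| :=
    lt_min (abs_pos.2 (hV'm E₀ hE₀)) (abs_pos.2 (hV'p E₀ hE₀))
  set m := min |deriv V (um E₀)| |deriv V (up E₀)| / 2
  have hnear : ∀ z, V z = E₀ → m < |deriv V z| → ∀ᶠ y in 𝓝 z, m * |y - z| ≤ |V y - E₀| :=
    fun z hz hmz => hz ▸ (hV.differentiable one_ne_zero z).hasDerivAt.eventually_mul_abs_sub_le hmz
  obtain ⟨E₁, hsidem, hsidep, hloc⟩ := exists_window_of_leftInvOn hI hum.continuousOn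
    hup.continuousOn hVm hVp hE₀
    (hnear _ (hVm E₀ hE₀) ((half_lt_self hd₀).trans_le (min_le_left _ _)))
    (hnear _ (hVp E₀ hE₀) ((half_lt_self hd₀).trans_le (min_le_right _ _)))
  have hK : (fun E => 2 * √(2 / c) * ∫ y in um E..up E, √(E - V y)) =ᶠ[𝓝 E₀]
      fun E => 2 * √(2 / c) * ∫ y in um E₁..up E₁, √(E - V y) := by
    filter_upwards [hloc] with E hE
    rw [hE _ (fun y hy => Real.sqrt_eq_zero'.2 (sub_nonpos.2 hy))
      ((by fun_prop : Continuous _).intervalIntegrable _ _)]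
  have hT := hloc.self_of_nhds (fun y => 1 / √(E₀ - V y))
    (fun y hy => by simp [Real.sqrt_eq_zero'.2 (sub_nonpos.2 hy)]) (hint E₀ hE₀)
  have hderiv := hasDerivAt_integral_sqrt_sub hVc
    (integrableOn_inv_sqrt_abs_sub_uIcc hVc (half_pos hd₀) (hlt E₀ hE₀).le (hbelow E₀ hE₀)
      (hint E₀ hE₀) hsidem hsidep)
    (ae_restrict_uIcc_ne (half_pos hd₀) (hlt E₀ hE₀).le (hbelow E₀ hE₀) hsidem hsidep)
  refine ((hderiv.const_mul (2 * √(2 / c))).congr_deriv ?_).congr_of_eventuallyEq hK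
  rw [← hT, Real.sqrt_div_eq_sqrt_mul_div zero_le_two]
  simp only [mul_inv, intervalIntegral.integral_const_mul, one_div]
  ring

/-- The classical action `K(E) = 2√(2/c) ∫_{u₋(E)}^{u₊(E)} √(E - V(y)) dy`
satisfies `K'(E) = T(E)/c`, where
`T(E) = √(2c) ∫_{u₋(E)}^{u₊(E)} (E - V(y))^{-1/2} dy` is the period. -/
theorem stmt_12 (c : ℝ) (hc : 0 < c)
    (I : Set ℝ) (hI : IsOpen I) (hIconn : I.OrdConnected)
    (V : ℝ → ℝ) (hV : ContDiff ℝ 1 V)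
    (um up : ℝ → ℝ) (hum : ContDiffOn ℝ 1 um I) (hup : ContDiffOn ℝ 1 up I)
    (hlt : ∀ E ∈ I, um E < up E)
    (hVm : ∀ E ∈ I, V (um E) = E) (hVp : ∀ E ∈ I, V (up E) = E)
    (hbelow : ∀ E ∈ I, ∀ y ∈ Set.Ioo (um E) (up E), V y < E)
    (hV'm : ∀ E ∈ I, deriv V (um E) ≠ 0) (hV'p : ∀ E ∈ I, deriv V (up E) ≠ 0)
    (hint : ∀ E ∈ I,
      IntervalIntegrable (fun y => 1 / Real.sqrt (E - V y)) volume (um E) (up E)) :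
    ∀ E ∈ I,
      HasDerivAt
        (fun E' => 2 * Real.sqrt (2 / c) * ∫ y in um E'..up E', Real.sqrt (E' - V y))
        ((Real.sqrt (2 * c) * ∫ y in um E..up E, 1 / Real.sqrt (E - V y)) / c) E :=
  stmt_12_general c I hI V hV um up hum hup hlt hVm hVp hbelow hV'm hV'p hint
end

section
/- Let T > 0, c > 0 and ε > 0, and let a, b, D : (-ε, ε) → ℝ be twice differentiable functions satisfying a(0) = 3, D(0) = D'(0) = D''(0) = 0, and, for all μ ∈ (-ε, ε), the two functional identities e^{-μT/c}·a(μ) = 2a(-μ) - b(-μ) - 3 and -e^{-μT/c} = -a(-μ) + b(-μ) - D(-μ) + 2. Then a'(0) = T/c, b'(0) = 0, and b''(0) = a''(0) - T²/c². -/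
/-!
Reading the second identity at `-μ` gives `b - a - D = -2 - exp (μ T / c)` near `0`, which pins
down `b' - a' - D'` and `b'' - a'' - D''` at `0`. Differentiating the first identity at `0`
gives `3 a'(0) - b'(0) = (T / c) a(0) = 3 T / c`. Since `D'(0) = D''(0) = 0`, these linear
relations determine `a'(0)`, `b'(0)` and `b''(0) - a''(0)`.
-/

open Filter Topology

section
variable {𝕜 : Type*} [NontriviallyNormedField 𝕜] {F : Type*} [NormedAddCommGroup F]
  [NormedSpace 𝕜 F] {f g : 𝕜 → F} {f' f'' g'' : F} {x : 𝕜}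

theorem HasDerivAt.comp_neg (hf : HasDerivAt f f' (-x)) :
    HasDerivAt (fun y ↦ f (-y)) (-f') x := by
  simpa [Function.comp_def] using hf.scomp x (hasDerivAt_neg x)

theorem hasDerivAt_deriv_sub (hf : ∀ᶠ y in 𝓝 x, DifferentiableAt 𝕜 f y)
    (hg : ∀ᶠ y in 𝓝 x, DifferentiableAt 𝕜 g y) (hf₂ : HasDerivAt (deriv f) f'' x)
    (hg₂ : HasDerivAt (deriv g) g'' x) :
    HasDerivAt (deriv fun y ↦ f y - g y) (f'' - g'') x := by
  refine (hf₂.sub hg₂).congr_of_eventuallyEq ?_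
  filter_upwards [hf, hg] with y hfy hgy using deriv_sub hfy hgy

end

theorem derivs_of_eventuallyEq_const_sub_exp {f : ℝ → ℝ} {C k x : ℝ}
    (h : f =ᶠ[𝓝 x] fun y ↦ C - Real.exp (k * y)) :
    deriv f x = -(k * Real.exp (k * x)) ∧
      deriv (deriv f) x = -(k ^ 2 * Real.exp (k * x)) := by
  have h₁ : deriv (fun y ↦ Real.exp (k * y)) = fun y ↦ k * Real.exp (k * y) := by
    simpa using iteratedDeriv_exp_const_mul 1 k
  have h₂ : deriv (deriv fun y ↦ Real.exp (k * y)) = fun y ↦ k ^ 2 * Real.exp (k * y) := by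
    simpa [iteratedDeriv_succ] using iteratedDeriv_exp_const_mul 2 k
  constructor
  · rw [h.deriv_eq, deriv_const_sub, h₁]
  · rw [h.deriv.deriv_eq, deriv_const_sub', deriv.fun_neg, h₂]

section
variable {a b D : ℝ → ℝ} {T c ε : ℝ}

theorem deriv_eq_of_exp_mul_eventuallyEq_reflect (ha : DifferentiableAt ℝ a 0)
    (hb : DifferentiableAt ℝ b 0)
    (h : (fun μ ↦ Real.exp (-μ * T / c) * a μ) =ᶠ[𝓝 0] fun μ ↦ 2 * a (-μ) - b (-μ) - 3) :
    3 * deriv a 0 - deriv b 0 = T / c * a 0 := by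
  have ha' : HasDerivAt a (deriv a 0) (-0) := by rw [neg_zero]; exact ha.hasDerivAt
  have hb' : HasDerivAt b (deriv b 0) (-0) := by rw [neg_zero]; exact hb.hasDerivAt
  have hexp : HasDerivAt (fun μ ↦ Real.exp (-μ * T / c)) (-(T / c)) 0 := by
    simpa [neg_div] using (((hasDerivAt_neg (0 : ℝ)).mul_const T).div_const c).exp
  have hL : HasDerivAt (fun μ ↦ Real.exp (-μ * T / c) * a μ) (-(T / c) * a 0 + deriv a 0) 0 := by
    simpa using hexp.fun_mul ha.hasDerivAt
  have hR : HasDerivAt (fun μ ↦ 2 * a (-μ) - b (-μ) - 3) (2 * -deriv a 0 - -deriv b 0) 0 :=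
    ((ha'.comp_neg.const_mul 2).sub hb'.comp_neg).sub_const 3
  linarith [(hL.congr_of_eventuallyEq h.symm).unique hR]

theorem sub_sub_eventuallyEq_of_reflect (hε : 0 < ε)
    (h : ∀ μ ∈ Set.Ioo (-ε) ε, -Real.exp (-μ * T / c) = -a (-μ) + b (-μ) - D (-μ) + 2) :
    (fun μ ↦ b μ - a μ - D μ) =ᶠ[𝓝 0] fun μ ↦ -2 - Real.exp (T / c * μ) := by
  filter_upwards [Ioo_mem_nhds (neg_neg_of_pos hε) hε] with μ hμ
  have hμ' := h (-μ) ⟨by linarith [hμ.2], by linarith [hμ.1]⟩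
  rw [show -(-μ) * T / c = T / c * μ by ring, neg_neg] at hμ'
  linarith

end

theorem stmt_13_general (T c ε : ℝ) (hε : 0 < ε)
    (a b D : ℝ → ℝ)
    (ha : ∀ μ ∈ Set.Ioo (-ε) ε, DifferentiableAt ℝ a μ ∧ DifferentiableAt ℝ (deriv a) μ)
    (hb : ∀ μ ∈ Set.Ioo (-ε) ε, DifferentiableAt ℝ b μ ∧ DifferentiableAt ℝ (deriv b) μ)
    (hD : ∀ μ ∈ Set.Ioo (-ε) ε, DifferentiableAt ℝ D μ ∧ DifferentiableAt ℝ (deriv D) μ)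
    (ha0 : a 0 = 3) (hD1 : deriv D 0 = 0) (hD2 : deriv (deriv D) 0 = 0)
    (hid1 : ∀ μ ∈ Set.Ioo (-ε) ε,
      Real.exp (-μ * T / c) * a μ = 2 * a (-μ) - b (-μ) - 3)
    (hid2 : ∀ μ ∈ Set.Ioo (-ε) ε,
      -Real.exp (-μ * T / c) = -a (-μ) + b (-μ) - D (-μ) + 2) :
    deriv a 0 = T / c ∧ deriv b 0 = 0 ∧
      deriv (deriv b) 0 = deriv (deriv a) 0 - T ^ 2 / c ^ 2 := by
  have hnear : Set.Ioo (-ε) ε ∈ 𝓝 (0 : ℝ) := Ioo_mem_nhds (neg_neg_of_pos hε) hε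
  have h0 : (0 : ℝ) ∈ Set.Ioo (-ε) ε := mem_of_mem_nhds hnear
  have hdiff : ∀ f : ℝ → ℝ, (∀ μ ∈ Set.Ioo (-ε) ε,
      DifferentiableAt ℝ f μ ∧ DifferentiableAt ℝ (deriv f) μ) →
      ∀ᶠ μ in 𝓝 (0 : ℝ), DifferentiableAt ℝ f μ :=
    fun f hf ↦ eventually_of_mem hnear fun μ hμ ↦ (hf μ hμ).1
  have hfirst := deriv_eq_of_exp_mul_eventuallyEq_reflect (ha 0 h0).1 (hb 0 h0).1
    (eventually_of_mem hnear hid1)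
  obtain ⟨hsub, hsub₂⟩ := derivs_of_eventuallyEq_const_sub_exp
    (sub_sub_eventuallyEq_of_reflect hε hid2)
  have hba : HasDerivAt (fun μ ↦ b μ - a μ - D μ) (deriv b 0 - deriv a 0 - deriv D 0) 0 :=
    ((hb 0 h0).1.hasDerivAt.sub (ha 0 h0).1.hasDerivAt).sub (hD 0 h0).1.hasDerivAt
  have hba₂ : HasDerivAt (deriv fun μ ↦ b μ - a μ - D μ)
      (deriv (deriv b) 0 - deriv (deriv a) 0 - deriv (deriv D) 0) 0 :=
    hasDerivAt_deriv_sub (((hdiff b hb).and (hdiff a ha)).mono fun _ h ↦ h.1.sub h.2)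
      (hdiff D hD)
      (hasDerivAt_deriv_sub (hdiff b hb) (hdiff a ha) (hb 0 h0).2.hasDerivAt
        (ha 0 h0).2.hasDerivAt)
      (hD 0 h0).2.hasDerivAt
  rw [hba.deriv] at hsub
  rw [hba₂.deriv] at hsub₂
  simp only [mul_zero, Real.exp_zero, mul_one] at hsub hsub₂
  rw [ha0] at hfirst
  refine ⟨by linarith, by linarith, ?_⟩
  rw [← div_pow]
  linarith

/-- The computational core of the normal form of the Evans function near the
origin: the two functional identities coming from the symmetry
`(x,μ) ↦ (-x,-μ)` force `a'(0) = T/c`, `b'(0) = 0` and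
`b''(0) = a''(0) - T²/c²`. -/
theorem stmt_13 (T c ε : ℝ) (hT : 0 < T) (hc : 0 < c) (hε : 0 < ε)
    (a b D : ℝ → ℝ)
    (ha : ∀ μ ∈ Set.Ioo (-ε) ε, DifferentiableAt ℝ a μ ∧ DifferentiableAt ℝ (deriv a) μ)
    (hb : ∀ μ ∈ Set.Ioo (-ε) ε, DifferentiableAt ℝ b μ ∧ DifferentiableAt ℝ (deriv b) μ)
    (hD : ∀ μ ∈ Set.Ioo (-ε) ε, DifferentiableAt ℝ D μ ∧ DifferentiableAt ℝ (deriv D) μ)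
    (ha0 : a 0 = 3) (hD0 : D 0 = 0) (hD1 : deriv D 0 = 0) (hD2 : deriv (deriv D) 0 = 0)
    (hid1 : ∀ μ ∈ Set.Ioo (-ε) ε,
      Real.exp (-μ * T / c) * a μ = 2 * a (-μ) - b (-μ) - 3)
    (hid2 : ∀ μ ∈ Set.Ioo (-ε) ε,
      -Real.exp (-μ * T / c) = -a (-μ) + b (-μ) - D (-μ) + 2) :
    deriv a 0 = T / c ∧ deriv b 0 = 0 ∧
      deriv (deriv b) 0 = deriv (deriv a) 0 - T ^ 2 / c ^ 2 :=
  stmt_13_general T c ε hε a b D ha hb hD ha0 hD1 hD2 hid1 hid2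
end

section
/- For every real p ≥ 1 and every u ∈ (0,1): (p - 2)·u^{p+1} < p - 2u; that is, p - 2u - (p-2)·u^{p+1} > 0. -/
/-- The key inequality in the proof that `M_a ≤ 0` near the solitary wave
limit: for `p ≥ 1` and `0 < u < 1`, `(p-2) u^{p+1} < p - 2u`. -/
theorem stmt_17 (p : ℝ) (hp : 1 ≤ p) (u : ℝ) (hu : u ∈ Set.Ioo (0 : ℝ) 1) :
    (p - 2) * u ^ (p + 1) < p - 2 * u := by
  obtain ⟨hu0, hu1⟩ := hu
  have hb : 1 + p * (u - 1) ≤ u ^ p := by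
    have := one_add_mul_self_le_rpow_one_add (s := u - 1) (by linarith) hp
    simpa using this
  have hsplit : u ^ (p + 1) = u ^ p * u := by
    rw [Real.rpow_add hu0, Real.rpow_one]
  have hle1 : u ^ p ≤ 1 := Real.rpow_le_one hu0.le hu1.le (by linarith)
  have hpos : 0 < u ^ p := Real.rpow_pos_of_pos hu0 p
  rw [hsplit]
  rcases le_or_gt 2 p with h2 | h2
  · nlinarith [mul_nonneg (mul_nonneg (sub_nonneg.2 h2) hu0.le) (sub_nonneg.2 hle1)]
  · have h3 : (2 - p) * u < 1 := by nlinarith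
    nlinarith [mul_le_mul_of_nonneg_left hb (mul_nonneg (by linarith : (0:ℝ) ≤ 2 - p) hu0.le),
      mul_pos (mul_pos (by linarith : (0:ℝ) < p) (by linarith : (0:ℝ) < 1 - u))
        (by linarith : (0:ℝ) < 1 - (2 - p) * u)]
end

section
/- For p > 0 define c₀(p) = p·(1 + √(2 + p/2))/(4 + 2p), and for c > 0 define g(p,c) = 4c - p + (4c + p)(c - 1)·p/((4 + p)·c). Then: (i) if 1 ≤ p < 4, then g(p,c) > 0 for all c > 1; (ii) if p > 4, then c₀(p) > 1, and g(p,c) < 0 for 1 < c < c₀(p), g(p,c₀(p)) = 0, and g(p,c) > 0 for c > c₀(p). -/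
/-!
Clearing denominators, `(4 + p) c · g(p,c) = (16 + 8p) c² - 8pc - p²`, a quadratic in `c` with
roots `c₀(p) > 0` and `c₁(p) = p (1 - √(2 + p/2)) / (4 + 2p) < 0`. Hence for `c > 0` the sign of
`g(p,c)` is the sign of `c - c₀(p)`, and it remains to compare `c₀(p)` with `1`: squaring,
`c₀(p) ≤ 1` amounts to `(p + 2)(p² - 16) ≤ 0`, i.e. to `p ≤ 4`.
-/

/-- The quantity `g(p,c)` whose sign determines `∂P/∂c` in the solitary wave
limit for the gBBM equation with power nonlinearity. -/
noncomputable def gBBMg (p c : ℝ) : ℝ :=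
  4 * c - p + (4 * c + p) * (c - 1) * p / ((4 + p) * c)

/-- The critical wave speed `c₀(p) = p (1 + √(2 + p/2)) / (4 + 2p)`. -/
noncomputable def gBBMc₀ (p : ℝ) : ℝ :=
  p * (1 + Real.sqrt (2 + p / 2)) / (4 + 2 * p)

noncomputable def gBBMc₁ (p : ℝ) : ℝ :=
  p * (1 - Real.sqrt (2 + p / 2)) / (4 + 2 * p)

section

variable {p : ℝ}

lemma gBBMg_eq_div (h4p : 4 + p ≠ 0) {c : ℝ} (hc : c ≠ 0) :
    gBBMg p c = ((16 + 8 * p) * c ^ 2 - 8 * p * c - p ^ 2) / ((4 + p) * c) := by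
  unfold gBBMg
  field_simp
  ring

lemma gBBM_quadratic_eq_mul (hp : -2 < p) (c : ℝ) :
    (16 + 8 * p) * c ^ 2 - 8 * p * c - p ^ 2 =
      8 * (2 + p) * (c - gBBMc₀ p) * (c - gBBMc₁ p) := by
  have hs : Real.sqrt (2 + p / 2) ^ 2 = 2 + p / 2 := Real.sq_sqrt (by linarith)
  have h42p : 4 + 2 * p ≠ 0 := by linarith
  unfold gBBMc₀ gBBMc₁
  generalize Real.sqrt (2 + p / 2) = s at hs ⊢
  rw [sub_div' h42p, sub_div' h42p, eq_comm]
  field_simp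
  linear_combination (-8 * p ^ 2 * (2 + p)) * hs

lemma gBBMc₀_pos (hp : 0 < p) : 0 < gBBMc₀ p := by
  unfold gBBMc₀
  positivity

lemma gBBMc₁_neg (hp : 0 < p) : gBBMc₁ p < 0 := by
  have hs : 1 < Real.sqrt (2 + p / 2) := by
    rw [Real.lt_sqrt zero_le_one]
    linarith
  exact div_neg_of_neg_of_pos (mul_neg_of_pos_of_neg hp (by linarith)) (by linarith)

lemma exists_pos_gBBMg_eq_mul (hp : 0 < p) {c : ℝ} (hc : 0 < c) :
    ∃ k > 0, gBBMg p c = (c - gBBMc₀ p) * k := by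
  refine ⟨8 * (2 + p) * (c - gBBMc₁ p) / ((4 + p) * c), ?_, ?_⟩
  · have := gBBMc₁_neg hp
    apply div_pos <;> nlinarith
  · rw [gBBMg_eq_div (by linarith) hc.ne', gBBM_quadratic_eq_mul (by linarith)]
    ring

lemma gBBMg_pos_iff (hp : 0 < p) {c : ℝ} (hc : 0 < c) : 0 < gBBMg p c ↔ gBBMc₀ p < c := by
  obtain ⟨k, hk, hg⟩ := exists_pos_gBBMg_eq_mul hp hc
  rw [hg, mul_pos_iff_of_pos_right hk, sub_pos]

lemma gBBMg_neg_iff (hp : 0 < p) {c : ℝ} (hc : 0 < c) : gBBMg p c < 0 ↔ c < gBBMc₀ p := by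
  obtain ⟨k, hk, hg⟩ := exists_pos_gBBMg_eq_mul hp hc
  rw [hg, ← zero_mul k, mul_lt_mul_iff_of_pos_right hk, sub_neg]

lemma gBBMg_gBBMc₀ (hp : 0 < p) : gBBMg p (gBBMc₀ p) = 0 := by
  obtain ⟨k, -, hg⟩ := exists_pos_gBBMg_eq_mul hp (gBBMc₀_pos hp)
  rw [hg, sub_self, zero_mul]

lemma gBBMc₀_le_one_iff (hp : 0 < p) : gBBMc₀ p ≤ 1 ↔ p ≤ 4 := by
  have hs : Real.sqrt (2 + p / 2) ^ 2 = 2 + p / 2 := Real.sq_sqrt (by linarith)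
  have hps : 0 ≤ p * Real.sqrt (2 + p / 2) := by positivity
  calc gBBMc₀ p ≤ 1 ↔ p * Real.sqrt (2 + p / 2) ≤ 4 + p := by
        unfold gBBMc₀
        rw [div_le_one (by linarith)]
        constructor <;> intro h <;> linarith
    _ ↔ (p * Real.sqrt (2 + p / 2)) ^ 2 ≤ (4 + p) ^ 2 :=
        (pow_le_pow_iff_left₀ hps (by linarith) two_ne_zero).symm
    _ ↔ p ≤ 4 := by
        rw [mul_pow, hs]
        constructor <;> intro h <;> nlinarith [mul_pos hp hp]

end

theorem stmt_18_general (p : ℝ) :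
    ((1 ≤ p ∧ p < 4) → ∀ c : ℝ, 1 < c → 0 < gBBMg p c) ∧
    (4 < p →
      1 < gBBMc₀ p ∧
      (∀ c : ℝ, 1 < c → c < gBBMc₀ p → gBBMg p c < 0) ∧
      gBBMg p (gBBMc₀ p) = 0 ∧
      (∀ c : ℝ, gBBMc₀ p < c → 0 < gBBMg p c)) := by
  constructor
  · rintro ⟨hp1, hp4⟩ c hc
    have hp : 0 < p := by linarith
    exact (gBBMg_pos_iff hp (by linarith)).2
      (((gBBMc₀_le_one_iff hp).2 hp4.le).trans_lt hc)
  · intro hp4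
    have hp : 0 < p := by linarith
    have hc₀ : 1 < gBBMc₀ p := not_le.1 (mt (gBBMc₀_le_one_iff hp).1 hp4.not_ge)
    refine ⟨hc₀, fun c hc hcc₀ => (gBBMg_neg_iff hp (by linarith)).2 hcc₀, gBBMg_gBBMc₀ hp,
      fun c hc₀c => (gBBMg_pos_iff hp (by linarith)).2 hc₀c⟩

/-- Sign analysis of `g(p,c)`: for `1 ≤ p < 4` it is positive for all `c > 1`;
for `p > 4`, `c₀(p) > 1` and `g(p,·)` is negative on `(1, c₀(p))`, vanishes at
`c₀(p)`, and is positive on `(c₀(p), ∞)`. -/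
theorem stmt_18 (p : ℝ) (hp : 0 < p) :
    ((1 ≤ p ∧ p < 4) → ∀ c : ℝ, 1 < c → 0 < gBBMg p c) ∧
    (4 < p →
      1 < gBBMc₀ p ∧
      (∀ c : ℝ, 1 < c → c < gBBMc₀ p → gBBMg p c < 0) ∧
      gBBMg p (gBBMc₀ p) = 0 ∧
      (∀ c : ℝ, gBBMc₀ p < c → 0 < gBBMg p c)) :=
  stmt_18_general p
end
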